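/- Let X and Y be n×n real symmetric positive definite matrices. Then for all s, t ∈ [0,1], (X *_s Y) *_t Y = X *_{s+t−st} Y. -/

import Mathlib

open Matrix Filter Topology
open scoped Classical

noncomputable section

/-- Square real matrices. -/
abbrev Mat (n : ℕ) := Matrix (Fin n) (Fin n) ℝ

/-- The largest element of the real spectrum of a matrix. -/
noncomputable def lamMax {n : ℕ} (A : Mat n) : ℝ := sSup (spectrum ℝ A)

/-- The smallest element of the real spectrum of a matrix. -/
noncomputable def lamMin {n : ℕ} (A : Mat n) : ℝ := sInf (spectrum ℝ A)

/-- The positive semidefinite square root (junk value `0` if not PSD). -/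
noncomputable def sqrtM {n : ℕ} (X : Mat n) : Mat n :=
  if h : X.PosSemidef then
    (h.1.eigenvectorUnitary : Mat n) * Matrix.diagonal (fun i => Real.sqrt (h.1.eigenvalues i)) *
      (star (h.1.eigenvectorUnitary : Mat n))
  else 0

/-- `X^{-1/2}` for a positive definite matrix. -/
noncomputable def invSqrt {n : ℕ} (X : Mat n) : Mat n := (sqrtM X)⁻¹

/-- `λ_max(X^{-1/2} Y X^{-1/2})`, the largest generalized eigenvalue of the pair `(Y, X)`. -/
noncomputable def gmax {n : ℕ} (X Y : Mat n) : ℝ := lamMax (invSqrt X * Y * invSqrt X)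

/-- `λ_min(X^{-1/2} Y X^{-1/2})`, the smallest generalized eigenvalue of the pair `(Y, X)`. -/
noncomputable def gmin {n : ℕ} (X Y : Mat n) : ℝ := lamMin (invSqrt X * Y * invSqrt X)

/-- The Thompson geodesic `X *_t Y`. -/
noncomputable def thompson {n : ℕ} (X Y : Mat n) (t : ℝ) : Mat n :=
  if gmin X Y = gmax X Y then (gmin X Y) ^ t • X
  else ((gmax X Y ^ t - gmin X Y ^ t) / (gmax X Y - gmin X Y)) • Y +
    ((gmax X Y * gmin X Y ^ t - gmin X Y * gmax X Y ^ t) / (gmax X Y - gmin X Y)) • X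

/-- The Thompson part metric on positive definite matrices. -/
noncomputable def dT {n : ℕ} (X Y : Mat n) : ℝ :=
  max (Real.log (gmax X Y)) (Real.log (gmax Y X))

/-- Hilbert's projective metric on positive definite matrices. -/
noncomputable def dH {n : ℕ} (X Y : Mat n) : ℝ :=
  Real.log (gmax X Y / gmin X Y)

/-- The coefficient `m(X,Y) = dφ/dt(0)` of the Thompson geodesic. -/
noncomputable def mCoef {n : ℕ} (X Y : Mat n) : ℝ :=
  if gmax X Y = gmin X Y then 1 / gmin X Y
  else (Real.log (gmax X Y) - Real.log (gmin X Y)) / (gmax X Y - gmin X Y)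

/-- The coefficient `o(X,Y) = dψ/dt(0)` of the Thompson geodesic. -/
noncomputable def oCoef {n : ℕ} (X Y : Mat n) : ℝ :=
  if gmax X Y = gmin X Y then Real.log (gmin X Y) - 1
  else (gmax X Y * Real.log (gmin X Y) - gmin X Y * Real.log (gmax X Y)) /
    (gmax X Y - gmin X Y)

/-- The mean equation `∑ⱼ m(X*,Yⱼ)·Yⱼ + (∑ⱼ o(X*,Yⱼ))·X* = 0`. -/
def MeanEq {n k : ℕ} (Y : Fin k → Mat n) (Xs : Mat n) : Prop :=
  ∑ j, mCoef Xs (Y j) • Y j + (∑ j, oCoef Xs (Y j)) • Xs = 0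

/-- The Frobenius norm of a matrix. -/
noncomputable def frob {n : ℕ} (A : Mat n) : ℝ :=
  Real.sqrt (∑ i, ∑ j, (A i j) ^ 2)

/-- The inductive sequence of Algorithm 4.1: `indSeq hk Y X₁ i = X_{i+1}`, so that
`indSeq hk Y X₁ 0 = X₁` and `X_{i+1} = X_i *_{1/(i+1)} Y_j` with `j ≡ i (mod k)`,
`1 ≤ j ≤ k`. -/
noncomputable def indSeq {n k : ℕ} (hk : 0 < k) (Y : Fin k → Mat n) (X₁ : Mat n) :
    ℕ → Mat n
  | 0 => X₁
  | (i + 1) => thompson (indSeq hk Y X₁ i) (Y ⟨i % k, Nat.mod_lt i hk⟩)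
      (1 / ((i : ℝ) + 2))

/-- The map `T_p(X) = (⋯((X *_{1/(pk+2)} Y₁) *_{1/(pk+3)} Y₂)⋯) *_{1/((p+1)k+1)} Y_k`. -/
noncomputable def Tmap {n k : ℕ} (Y : Fin k → Mat n) (p : ℕ) (X : Mat n) : Mat n :=
  (List.finRange k).foldl
    (fun Z j => thompson Z (Y j) (1 / ((p : ℝ) * (k : ℝ) + ((j : ℕ) : ℝ) + 2))) X

/-- The spectral `t`-th power of a symmetric matrix (junk value `0` otherwise). -/
noncomputable def spdPow {n : ℕ} (A : Mat n) (t : ℝ) : Mat n :=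
  if h : A.IsHermitian then
    (h.eigenvectorUnitary : Mat n) * Matrix.diagonal (fun i => h.eigenvalues i ^ t) *
      (star (h.eigenvectorUnitary : Mat n))
  else 0

/-- The affine-invariant Riemannian geodesic `X #_t Y = X^{1/2} (X^{-1/2} Y X^{-1/2})^t X^{1/2}`. -/
noncomputable def riemann {n : ℕ} (X Y : Mat n) (t : ℝ) : Mat n :=
  sqrtM X * spdPow (invSqrt X * Y * invSqrt X) t * sqrtM X

/-!
Simultaneous diagonalisation writes `X = P Pᴴ` and `Y = P diag(μ) Pᴴ`, where `μ` runs over the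
generalized eigenvalues of `(Y, X)`. Then `φ Y + ψ X = P diag(φ μ + ψ) Pᴴ`, so the generalized
eigenvalues of `(Y, φ Y + ψ X)` are the `μ / (φ μ + ψ)`. For the geodesic, `φ x + ψ` is the affine
interpolant of `x ^ s` at `α` and `β`, and `x ↦ x / (φ x + ψ)` is increasing, so the extreme
generalized eigenvalues of `(Y, X *_s Y)` are `α ^ (1 - s)` and `β ^ (1 - s)`. What remains is
scalar: the coefficients of `(X *_s Y) *_t Y` interpolate `x ^ (s + t - s t)` at `α` and `β`,
which determines them when `α ≠ β`.
-/

section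

variable {n : ℕ}

theorem sqrtM_mul_self {X : Mat n} (hX : X.PosSemidef) : sqrtM X * sqrtM X = X := by
  set U : Mat n := (hX.1.eigenvectorUnitary : Mat n)
  have hU : star U * U = 1 := mem_unitaryGroup_iff'.mp hX.1.eigenvectorUnitary.2
  have hconj : ∀ D D' : Mat n, U * D * star U * (U * D' * star U) = U * (D * D') * star U := by
    intro D D'
    simp only [mul_assoc, ← mul_assoc (star U) U, hU, one_mul]
  rw [sqrtM, dif_pos hX, hconj, diagonal_mul_diagonal]
  conv_rhs => rw [hX.1.spectral_theorem, Unitary.conjStarAlgAut_apply]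
  congr 3
  ext i
  exact Real.mul_self_sqrt (hX.eigenvalues_nonneg i)

theorem isHermitian_sqrtM {X : Mat n} (hX : X.PosSemidef) : (sqrtM X).IsHermitian := by
  rw [sqrtM, dif_pos hX]
  exact isHermitian_mul_mul_conjTranspose _ (isHermitian_diagonal _)

theorem isUnit_sqrtM {X : Mat n} (hX : X.PosDef) : IsUnit (sqrtM X) :=
  isUnit_of_mul_isUnit_left (sqrtM_mul_self hX.posSemidef ▸ hX.isUnit)

theorem spectrum_mul_mul_inv {P : Mat n} (hP : IsUnit P) (A : Mat n) :
    spectrum ℝ (P * A * P⁻¹) = spectrum ℝ A := by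
  lift P to (Mat n)ˣ using hP
  rw [← coe_units_inv, spectrum.units_conjugate]

theorem spectrum_conj_diagonal_mul_inv {P : Mat n} (hP : IsUnit P) (d e : Fin n → ℝ)
    (he : ∀ i, e i ≠ 0) :
    spectrum ℝ (P * diagonal d * Pᴴ * (P * diagonal e * Pᴴ)⁻¹) =
      Set.range (fun i => d i / e i) := by
  have hPh : IsUnit Pᴴ.det := (isUnit_iff_isUnit_det _).mp (by simpa using hP.star)
  have hde : diagonal d * (diagonal e)⁻¹ = diagonal (fun i => d i / e i) := by
    have hinv : (diagonal e)⁻¹ = diagonal (fun i => (e i)⁻¹) := by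
      refine inv_eq_right_inv ?_
      rw [diagonal_mul_diagonal, ← diagonal_one]
      exact congrArg diagonal (funext fun i => mul_inv_cancel₀ (he i))
    rw [hinv, diagonal_mul_diagonal]
    rfl
  have hconj : P * diagonal d * Pᴴ * (P * diagonal e * Pᴴ)⁻¹ =
      P * (diagonal d * (diagonal e)⁻¹) * P⁻¹ := by
    simp only [Matrix.mul_inv_rev, mul_assoc, mul_nonsing_inv_cancel_left _ _ hPh]
  rw [hconj, hde, spectrum_mul_mul_inv hP, spectrum_diagonal]

def genSpectrum (X Y : Mat n) : Set ℝ := spectrum ℝ (invSqrt X * Y * invSqrt X)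

theorem genSpectrum_eq_spectrum_mul_inv {X : Mat n} (hX : X.PosDef) (Y : Mat n) :
    genSpectrum X Y = spectrum ℝ (Y * X⁻¹) := by
  have hQ := isUnit_sqrtM hX
  have hQQ := sqrtM_mul_self hX.posSemidef
  rw [genSpectrum, invSqrt]
  set Q := sqrtM X
  have hconj : Y * X⁻¹ = Q * (Q⁻¹ * Y * Q⁻¹) * Q⁻¹ := by
    rw [← hQQ, Matrix.mul_inv_rev]
    simp only [mul_assoc, mul_nonsing_inv_cancel_left _ _ ((isUnit_iff_isUnit_det _).mp hQ)]
  rw [hconj, spectrum_mul_mul_inv hQ]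

theorem exists_simultaneous_diagonalization {X Y : Mat n} (hX : X.PosDef) (hY : Y.IsHermitian) :
    ∃ P : Mat n, IsUnit P ∧ ∃ μ : Fin n → ℝ, X = P * Pᴴ ∧ Y = P * diagonal μ * Pᴴ := by
  have hQQ := sqrtM_mul_self hX.posSemidef
  have hQh := (isHermitian_sqrtM hX.posSemidef).eq
  have hQ := (isUnit_iff_isUnit_det _).mp (isUnit_sqrtM hX)
  set Q := sqrtM X
  have hS : (Q⁻¹ * Y * Q⁻¹).IsHermitian := by
    have hQi : Q⁻¹ᴴ = Q⁻¹ := by rw [conjTranspose_nonsing_inv, hQh]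
    simpa only [hQi] using isHermitian_conjTranspose_mul_mul Q⁻¹ hY
  obtain ⟨V, μ, hspec⟩ : ∃ (V : unitaryGroup (Fin n) ℝ) (μ : Fin n → ℝ),
      Q⁻¹ * Y * Q⁻¹ = V * diagonal μ * star (V : Mat n) := by
    refine ⟨hS.eigenvectorUnitary, hS.eigenvalues, ?_⟩
    simpa only [Unitary.conjStarAlgAut_apply, RCLike.ofReal_real_eq_id, Function.id_comp]
      using hS.spectral_theorem
  have hV : (V : Mat n) * star (V : Mat n) = 1 := mem_unitaryGroup_iff.mp V.2
  refine ⟨Q * (V : Mat n), (isUnit_sqrtM hX).mul Unitary.isUnit_coe, μ, ?_, ?_⟩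
  · rw [conjTranspose_mul, hQh, ← star_eq_conjTranspose, mul_assoc, ← mul_assoc (V : Mat n), hV,
      one_mul, hQQ]
  · calc Y = Q * (Q⁻¹ * Y * Q⁻¹) * Q := by
          simp only [mul_assoc, mul_nonsing_inv_cancel_left _ _ hQ, nonsing_inv_mul _ hQ, mul_one]
      _ = Q * V * diagonal μ * (Q * (V : Mat n))ᴴ := by
          rw [hspec, conjTranspose_mul, hQh, star_eq_conjTranspose]
          simp only [mul_assoc]

theorem posDef_smul_add_smul {X Y : Mat n} (hX : X.PosDef) (hY : Y.PosDef) {φ ψ : ℝ}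
    (hφ : 0 ≤ φ) (hψ : 0 ≤ ψ) (hφψ : 0 < φ + ψ) : (φ • Y + ψ • X).PosDef := by
  rcases hφ.eq_or_lt with rfl | hφ
  · rw [zero_smul, zero_add]
    exact hX.smul (by simpa using hφψ)
  · exact (hY.smul hφ).add_posSemidef (hX.posSemidef.smul hψ)

theorem genSpectrum_smul_add_smul {X Y : Mat n} (hX : X.PosDef) (hY : Y.IsHermitian) {φ ψ : ℝ}
    (hZ : (φ • Y + ψ • X).PosDef) (hne : ∀ x ∈ genSpectrum X Y, φ * x + ψ ≠ 0) :
    genSpectrum (φ • Y + ψ • X) Y = (fun x => x / (φ * x + ψ)) '' genSpectrum X Y := by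
  obtain ⟨P, hP, μ, rfl, rfl⟩ := exists_simultaneous_diagonalization hX hY
  have hμ : genSpectrum (P * Pᴴ) (P * diagonal μ * Pᴴ) = Set.range μ := by
    rw [genSpectrum_eq_spectrum_mul_inv hX, show P * Pᴴ = P * diagonal 1 * Pᴴ by simp,
      spectrum_conj_diagonal_mul_inv hP μ 1 fun _ => one_ne_zero]
    simp
  have hZ' : φ • (P * diagonal μ * Pᴴ) + ψ • (P * Pᴴ) =
      P * diagonal (fun i => φ * μ i + ψ) * Pᴴ := by
    have hdiag : diagonal (fun i => φ * μ i + ψ) = φ • diagonal μ + ψ • (1 : Mat n) := by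
      rw [← diagonal_one, ← diagonal_smul, ← diagonal_smul, diagonal_add]
      simp
    rw [hdiag]
    simp only [Matrix.mul_add, Matrix.add_mul, Matrix.mul_smul, Matrix.smul_mul, mul_one]
  rw [genSpectrum_eq_spectrum_mul_inv hZ, hZ',
    spectrum_conj_diagonal_mul_inv hP _ _ fun i => hne _ (hμ ▸ Set.mem_range_self i), hμ,
    ← Set.range_comp]
  rfl

theorem posDef_invSqrt_mul_mul_invSqrt {X Y : Mat n} (hX : X.PosDef) (hY : Y.PosDef) :
    (invSqrt X * Y * invSqrt X).PosDef := by
  have hW : (invSqrt X)ᴴ = invSqrt X := by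
    rw [invSqrt, conjTranspose_nonsing_inv, (isHermitian_sqrtM hX.posSemidef).eq]
  have hW' : IsUnit (invSqrt X) := isUnit_nonsing_inv_iff.mpr (isUnit_sqrtM hX)
  simpa only [hW] using hY.conjTranspose_mul_mul_same (mulVec_injective_of_isUnit hW')

theorem genSpectrum_eq_range_eigenvalues {X Y : Mat n} (hX : X.PosDef) (hY : Y.PosDef) :
    genSpectrum X Y = Set.range (posDef_invSqrt_mul_mul_invSqrt hX hY).1.eigenvalues :=
  (posDef_invSqrt_mul_mul_invSqrt hX hY).1.spectrum_real_eq_range_eigenvalues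

theorem pos_of_mem_genSpectrum {X Y : Mat n} (hX : X.PosDef) (hY : Y.PosDef) {x : ℝ}
    (hx : x ∈ genSpectrum X Y) : 0 < x := by
  obtain ⟨i, rfl⟩ := genSpectrum_eq_range_eigenvalues hX hY ▸ hx
  exact (posDef_invSqrt_mul_mul_invSqrt hX hY).eigenvalues_pos i

theorem genSpectrum_finite (X Y : Mat n) : (genSpectrum X Y).Finite :=
  finite_spectrum _

theorem genSpectrum_nonempty [NeZero n] {X Y : Mat n} (hX : X.PosDef) (hY : Y.PosDef) :
    (genSpectrum X Y).Nonempty :=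
  genSpectrum_eq_range_eigenvalues hX hY ▸ Set.range_nonempty _

theorem isLeast_gmin [NeZero n] {X Y : Mat n} (hX : X.PosDef) (hY : Y.PosDef) :
    IsLeast (genSpectrum X Y) (gmin X Y) :=
  ⟨(genSpectrum_nonempty hX hY).csInf_mem (genSpectrum_finite X Y),
    fun _ hx => csInf_le (genSpectrum_finite X Y).bddBelow hx⟩

theorem isGreatest_gmax [NeZero n] {X Y : Mat n} (hX : X.PosDef) (hY : Y.PosDef) :
    IsGreatest (genSpectrum X Y) (gmax X Y) :=
  ⟨(genSpectrum_nonempty hX hY).csSup_mem (genSpectrum_finite X Y),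
    fun _ hx => le_csSup (genSpectrum_finite X Y).bddAbove hx⟩

theorem gmin_pos [NeZero n] {X Y : Mat n} (hX : X.PosDef) (hY : Y.PosDef) : 0 < gmin X Y :=
  pos_of_mem_genSpectrum hX hY (isLeast_gmin hX hY).1

theorem gmin_le_gmax [NeZero n] {X Y : Mat n} (hX : X.PosDef) (hY : Y.PosDef) :
    gmin X Y ≤ gmax X Y :=
  (isLeast_gmin hX hY).2 (isGreatest_gmax hX hY).1

theorem mul_add_pos_of_nonneg {φ ψ x : ℝ} (hφ : 0 ≤ φ) (hψ : 0 ≤ ψ) (hφψ : 0 < φ + ψ)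
    (hx : 0 < x) : 0 < φ * x + ψ := by
  rcases hφ.eq_or_lt with rfl | hφ
  · simpa using hφψ
  · positivity

theorem monotoneOn_div_mul_add {φ ψ : ℝ} (hφ : 0 ≤ φ) (hψ : 0 ≤ ψ) (hφψ : 0 < φ + ψ) :
    MonotoneOn (fun x => x / (φ * x + ψ)) (Set.Ioi 0) := by
  intro x hx y hy hxy
  have hdx := mul_add_pos_of_nonneg hφ hψ hφψ hx
  have hdy := mul_add_pos_of_nonneg hφ hψ hφψ hy
  dsimp only
  rw [div_le_div_iff₀ hdx hdy]
  nlinarith [mul_le_mul_of_nonneg_left hxy hψ]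

theorem genSpectrum_smul_add_smul_of_nonneg {X Y : Mat n} (hX : X.PosDef) (hY : Y.PosDef)
    {φ ψ : ℝ} (hφ : 0 ≤ φ) (hψ : 0 ≤ ψ) (hφψ : 0 < φ + ψ) :
    genSpectrum (φ • Y + ψ • X) Y = (fun x => x / (φ * x + ψ)) '' genSpectrum X Y :=
  genSpectrum_smul_add_smul hX hY.1 (posDef_smul_add_smul hX hY hφ hψ hφψ) fun _ hx =>
    (mul_add_pos_of_nonneg hφ hψ hφψ (pos_of_mem_genSpectrum hX hY hx)).ne'

theorem gmin_smul_add_smul [NeZero n] {X Y : Mat n} (hX : X.PosDef) (hY : Y.PosDef) {φ ψ : ℝ}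
    (hφ : 0 ≤ φ) (hψ : 0 ≤ ψ) (hφψ : 0 < φ + ψ) :
    gmin (φ • Y + ψ • X) Y = gmin X Y / (φ * gmin X Y + ψ) := by
  have hmono := (monotoneOn_div_mul_add hφ hψ hφψ).mono fun _ hx => pos_of_mem_genSpectrum hX hY hx
  have hleast := hmono.map_isLeast (isLeast_gmin hX hY)
  rw [← genSpectrum_smul_add_smul_of_nonneg hX hY hφ hψ hφψ] at hleast
  exact hleast.csInf_eq

theorem gmax_smul_add_smul [NeZero n] {X Y : Mat n} (hX : X.PosDef) (hY : Y.PosDef) {φ ψ : ℝ}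
    (hφ : 0 ≤ φ) (hψ : 0 ≤ ψ) (hφψ : 0 < φ + ψ) :
    gmax (φ • Y + ψ • X) Y = gmax X Y / (φ * gmax X Y + ψ) := by
  have hmono := (monotoneOn_div_mul_add hφ hψ hφψ).mono fun _ hx => pos_of_mem_genSpectrum hX hY hx
  have hgreatest := hmono.map_isGreatest (isGreatest_gmax hX hY)
  rw [← genSpectrum_smul_add_smul_of_nonneg hX hY hφ hψ hφψ] at hgreatest
  exact hgreatest.csSup_eq

def thompsonPhi (α β t : ℝ) : ℝ := if α = β then 0 else (β ^ t - α ^ t) / (β - α)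

def thompsonPsi (α β t : ℝ) : ℝ := if α = β then α ^ t else (β * α ^ t - α * β ^ t) / (β - α)

theorem thompson_eq_smul_add_smul (X Y : Mat n) (t : ℝ) :
    thompson X Y t = thompsonPhi (gmin X Y) (gmax X Y) t • Y +
      thompsonPsi (gmin X Y) (gmax X Y) t • X := by
  unfold thompson thompsonPhi thompsonPsi
  split_ifs <;> simp

theorem thompsonPhi_mul_add_thompsonPsi_left (α β t : ℝ) :
    thompsonPhi α β t * α + thompsonPsi α β t = α ^ t := by
  unfold thompsonPhi thompsonPsi
  split_ifs with h
  · simp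
  · field_simp [sub_ne_zero.mpr (Ne.symm h)]
    ring

theorem thompsonPhi_mul_add_thompsonPsi_right (α β t : ℝ) :
    thompsonPhi α β t * β + thompsonPsi α β t = β ^ t := by
  unfold thompsonPhi thompsonPsi
  split_ifs with h
  · simp [h]
  · field_simp [sub_ne_zero.mpr (Ne.symm h)]
    ring

theorem eq_thompsonPhi_and_eq_thompsonPsi {α β t a b : ℝ} (hαβ : α ≠ β)
    (hα : a * α + b = α ^ t) (hβ : a * β + b = β ^ t) :
    a = thompsonPhi α β t ∧ b = thompsonPsi α β t := by
  have hsub : β - α ≠ 0 := sub_ne_zero.mpr hαβ.symm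
  simp only [thompsonPhi, thompsonPsi, if_neg hαβ, eq_div_iff hsub]
  constructor
  · linear_combination hβ - hα
  · linear_combination β * hα - α * hβ

theorem thompsonPhi_nonneg {α β t : ℝ} (hα : 0 < α) (hαβ : α ≤ β) (ht : 0 ≤ t) :
    0 ≤ thompsonPhi α β t := by
  unfold thompsonPhi
  split_ifs
  · exact le_rfl
  · exact div_nonneg (sub_nonneg.mpr (Real.rpow_le_rpow hα.le hαβ ht)) (sub_nonneg.mpr hαβ)

theorem thompsonPsi_nonneg {α β t : ℝ} (hα : 0 < α) (hαβ : α ≤ β) (ht : t ≤ 1) :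
    0 ≤ thompsonPsi α β t := by
  have hβ := hα.trans_le hαβ
  unfold thompsonPsi
  split_ifs
  · positivity
  refine div_nonneg (sub_nonneg.mpr ?_) (sub_nonneg.mpr hαβ)
  have hsplit : ∀ x : ℝ, 0 < x → x = x ^ (1 - t) * x ^ t := fun x hx => by
    rw [← Real.rpow_add hx]; simp
  calc α * β ^ t = α ^ (1 - t) * α ^ t * β ^ t := by rw [← hsplit α hα]
    _ ≤ β ^ (1 - t) * α ^ t * β ^ t := by gcongr
    _ = α ^ t * (β ^ (1 - t) * β ^ t) := by ring
    _ = β * α ^ t := by rw [← hsplit β hβ, mul_comm]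

theorem mul_add_eq_rpow_comp {x s t φ ψ φ' ψ' : ℝ} (hx : 0 < x) (h : φ * x + ψ = x ^ s)
    (h' : φ' * x ^ (1 - s) + ψ' = (x ^ (1 - s)) ^ t) :
    (φ' + ψ' * φ) * x + ψ' * ψ = x ^ (s + t - s * t) := by
  have hsplit : x = x ^ s * x ^ (1 - s) := by rw [← Real.rpow_add hx]; simp
  calc (φ' + ψ' * φ) * x + ψ' * ψ = φ' * x + ψ' * x ^ s := by rw [← h]; ring
    _ = x ^ s * (φ' * x ^ (1 - s) + ψ') := by nth_rewrite 1 [hsplit]; ring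
    _ = x ^ (s + t - s * t) := by
      rw [h', ← Real.rpow_mul hx.le, ← Real.rpow_add hx]; ring_nf

theorem thompsonPhi_comp_and_thompsonPsi_comp {α β : ℝ} (hα : 0 < α) (hβ : 0 < β) (s t : ℝ) :
    thompsonPhi (α ^ (1 - s)) (β ^ (1 - s)) t +
        thompsonPsi (α ^ (1 - s)) (β ^ (1 - s)) t * thompsonPhi α β s =
      thompsonPhi α β (s + t - s * t) ∧
    thompsonPsi (α ^ (1 - s)) (β ^ (1 - s)) t * thompsonPsi α β s =
      thompsonPsi α β (s + t - s * t) := by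
  have hαcomp := mul_add_eq_rpow_comp hα (thompsonPhi_mul_add_thompsonPsi_left α β s)
    (thompsonPhi_mul_add_thompsonPsi_left _ (β ^ (1 - s)) t)
  rcases eq_or_ne α β with rfl | hαβ
  · simp only [thompsonPhi, thompsonPsi, if_true] at hαcomp ⊢
    simpa using hαcomp
  · have hβcomp := mul_add_eq_rpow_comp hβ (thompsonPhi_mul_add_thompsonPsi_right α β s)
      (thompsonPhi_mul_add_thompsonPsi_right (α ^ (1 - s)) _ t)
    exact eq_thompsonPhi_and_eq_thompsonPsi hαβ hαcomp hβcomp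

theorem thompsonPhi_add_thompsonPsi_pos {α β t : ℝ} (hα : 0 < α) (hαβ : α ≤ β)
    (ht : t ∈ Set.Icc (0 : ℝ) 1) : 0 < thompsonPhi α β t + thompsonPsi α β t := by
  have hinterp := thompsonPhi_mul_add_thompsonPsi_left α β t
  nlinarith [thompsonPhi_nonneg hα hαβ ht.1, thompsonPsi_nonneg hα hαβ ht.2,
    Real.rpow_pos_of_pos hα t]

theorem gmin_thompson [NeZero n] {X Y : Mat n} (hX : X.PosDef) (hY : Y.PosDef) {s : ℝ}
    (hs : s ∈ Set.Icc (0 : ℝ) 1) : gmin (thompson X Y s) Y = gmin X Y ^ (1 - s) := by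
  have hα := gmin_pos hX hY
  have hαβ := gmin_le_gmax hX hY
  rw [thompson_eq_smul_add_smul, gmin_smul_add_smul hX hY (thompsonPhi_nonneg hα hαβ hs.1)
    (thompsonPsi_nonneg hα hαβ hs.2) (thompsonPhi_add_thompsonPsi_pos hα hαβ hs),
    thompsonPhi_mul_add_thompsonPsi_left, Real.rpow_sub hα, Real.rpow_one]

theorem gmax_thompson [NeZero n] {X Y : Mat n} (hX : X.PosDef) (hY : Y.PosDef) {s : ℝ}
    (hs : s ∈ Set.Icc (0 : ℝ) 1) : gmax (thompson X Y s) Y = gmax X Y ^ (1 - s) := by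
  have hα := gmin_pos hX hY
  have hαβ := gmin_le_gmax hX hY
  rw [thompson_eq_smul_add_smul, gmax_smul_add_smul hX hY (thompsonPhi_nonneg hα hαβ hs.1)
    (thompsonPsi_nonneg hα hαβ hs.2) (thompsonPhi_add_thompsonPsi_pos hα hαβ hs),
    thompsonPhi_mul_add_thompsonPsi_right, Real.rpow_sub (hα.trans_le hαβ), Real.rpow_one]

end

theorem thompson_consistency_right_general {n : ℕ} (X Y : Mat n) (hX : X.PosDef) (hY : Y.PosDef)
    (s t : ℝ) (hs : s ∈ Set.Icc (0 : ℝ) 1) :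
    thompson (thompson X Y s) Y t = thompson X Y (s + t - s * t) := by
  rcases n.eq_zero_or_pos with rfl | hn
  · exact Subsingleton.elim _ _
  have : NeZero n := ⟨hn.ne'⟩
  have hα := gmin_pos hX hY
  obtain ⟨hφ, hψ⟩ :=
    thompsonPhi_comp_and_thompsonPsi_comp hα (hα.trans_le (gmin_le_gmax hX hY)) s t
  rw [thompson_eq_smul_add_smul (thompson X Y s), gmin_thompson hX hY hs, gmax_thompson hX hY hs,
    thompson_eq_smul_add_smul X Y s, thompson_eq_smul_add_smul X Y (s + t - s * t), ← hφ, ← hψ]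
  module

/-- geodesic consistency `(X *_s Y) *_t Y = X *_{s+t-st} Y`. -/
theorem thompson_consistency_right {n : ℕ} (X Y : Mat n) (hX : X.PosDef) (hY : Y.PosDef)
    (s t : ℝ) (hs : s ∈ Set.Icc (0 : ℝ) 1) (ht : t ∈ Set.Icc (0 : ℝ) 1) :
    thompson (thompson X Y s) Y t = thompson X Y (s + t - s * t) :=
  thompson_consistency_right_general X Y hX hY s t hs
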